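/- Let Λ < 0, Q ≠ 0 and s ∈ (0,1] satisfy sM² > Q² (so M > 0), and assume Λ₋ < Λ < 0 (note Λ₋ < 0 under these hypotheses). Then P(·,s) has exactly two real roots, both positive, say R < r₀; they satisfy P'(R,s) > 0 and P'(r₀,s) < 0; and P(r,s) < 0 for all r ∈ [0,R) ∪ (r₀,∞). -/

import Mathlib

noncomputable section

/-- The quartic polynomial `P(r,s) = sL/3*r^4 - r^2 + 2sM*r - sQ^2` (case `Q != 0`). -/
def P (M Q Λ s r : ℝ) : ℝ := s * Λ / 3 * r ^ 4 - r ^ 2 + 2 * s * M * r - s * Q ^ 2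

/-- First derivative of `P` with respect to `r`. -/
def P' (M Q Λ s r : ℝ) : ℝ := 4 * s * Λ / 3 * r ^ 3 - 2 * r + 2 * s * M

/-- Second derivative of `P` with respect to `r`. -/
def P'' (M Q Λ s r : ℝ) : ℝ := 4 * s * Λ * r ^ 2 - 2

/-- `Λ₋`, defined for `β := 9sM² − 8Q² ≥ 0`. -/
def Λminus (M Q s : ℝ) : ℝ :=
  1 / (32 * s ^ 2 * Q ^ 6) *
    (8 * Q ^ 4 - (9 * s * M ^ 2 - 8 * Q ^ 2) * (9 * s * M ^ 2 - 8 * Q ^ 2 + 4 * Q ^ 2)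
      - 3 * Real.sqrt (s * M ^ 2 * (9 * s * M ^ 2 - 8 * Q ^ 2) ^ 3))

/-- `Λ₊`, defined for `β := 9sM² − 8Q² ≥ 0`. -/
def Λplus (M Q s : ℝ) : ℝ :=
  1 / (32 * s ^ 2 * Q ^ 6) *
    (8 * Q ^ 4 - (9 * s * M ^ 2 - 8 * Q ^ 2) * (9 * s * M ^ 2 - 8 * Q ^ 2 + 4 * Q ^ 2)
      + 3 * Real.sqrt (s * M ^ 2 * (9 * s * M ^ 2 - 8 * Q ^ 2) ^ 3))

/-! For `Λ < 0` the quartic `P` is strictly concave, negative at `0` and at `2sM`. At `Λ = Λ₋`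
it has a double root `c` between these two points, and since `P` increases with `Λ` at every
`r ≠ 0`, `P(c) > 0` once `Λ > Λ₋`. A strictly concave function with this sign pattern has exactly
two roots, one on either side of `c`, crosses upwards at the first and downwards at the second,
and is negative outside them. -/

open Set

section StrictConcave

variable {f : ℝ → ℝ}

theorem StrictConcaveOn.min_lt_of_lt_of_lt (hf : StrictConcaveOn ℝ univ f) {x y z : ℝ}
    (hxy : x < y) (hyz : y < z) : min (f x) (f z) < f y :=
  hf.lt_on_openSegment trivial trivial (hxy.trans hyz).ne
    (by rw [openSegment_eq_Ioo (hxy.trans hyz)]; exact ⟨hxy, hyz⟩)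

theorem StrictConcaveOn.exists_two_roots (hf : StrictConcaveOn ℝ univ f) (hcont : Continuous f)
    {a b c : ℝ} (hac : a < c) (hcb : c < b) (ha : f a < 0) (hc : 0 < f c) (hb : f b < 0) :
    ∃ R r₀, a < R ∧ R < c ∧ c < r₀ ∧ f R = 0 ∧ f r₀ = 0 ∧
      (∀ x, f x = 0 → x = R ∨ x = r₀) ∧ (∀ x, x < R → f x < 0) ∧ (∀ x, r₀ < x → f x < 0) := by
  obtain ⟨R, ⟨haR, hRc⟩, hR⟩ := intermediate_value_Ioo hac.le hcont.continuousOn ⟨ha, hc⟩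
  obtain ⟨r₀, ⟨hcr₀, -⟩, hr₀⟩ := intermediate_value_Ioo' hcb.le hcont.continuousOn ⟨hb, hc⟩
  have hleft : ∀ x, x < R → f x < 0 := fun x hx => by
    have := hf.min_lt_of_lt_of_lt hx hRc
    rw [hR, min_lt_iff] at this
    exact this.resolve_right hc.not_gt
  have hright : ∀ x, r₀ < x → f x < 0 := fun x hx => by
    have := hf.min_lt_of_lt_of_lt hcr₀ hx
    rw [hr₀, min_lt_iff] at this
    exact this.resolve_left hc.not_gt
  have hmid : ∀ x, R < x → x < r₀ → 0 < f x := fun x h₁ h₂ => by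
    simpa only [hR, hr₀, min_self] using hf.min_lt_of_lt_of_lt h₁ h₂
  refine ⟨R, r₀, haR, hRc, hcr₀, hR, hr₀, fun x hx => ?_, hleft, hright⟩
  rcases lt_trichotomy x R with h | h | h
  · exact absurd hx (hleft x h).ne
  · exact .inl h
  rcases lt_trichotomy x r₀ with h' | h' | h'
  · exact absurd hx (hmid x h h').ne'
  · exact .inr h'
  · exact absurd hx (hright x h').ne

theorem StrictConcaveOn.hasDerivAt_pos_of_le (hf : StrictConcaveOn ℝ univ f) {x y f' : ℝ}
    (hxy : x < y) (hfxy : f x ≤ f y) (hd : HasDerivAt f f' x) : 0 < f' := by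
  refine lt_of_le_of_lt ?_ (hf.slope_lt_of_hasDerivAt trivial trivial hxy hd)
  rw [slope_def_field]
  exact div_nonneg (sub_nonneg.2 hfxy) (sub_nonneg.2 hxy.le)

theorem StrictConcaveOn.hasDerivAt_neg_of_ge (hf : StrictConcaveOn ℝ univ f) {x y f' : ℝ}
    (hxy : x < y) (hfxy : f y ≤ f x) (hd : HasDerivAt f f' y) : f' < 0 := by
  refine (hf.lt_slope_of_hasDerivAt trivial trivial hxy hd).trans_le ?_
  rw [slope_def_field]
  exact div_nonpos_of_nonpos_of_nonneg (sub_nonpos.2 hfxy) (sub_nonneg.2 hxy.le)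

end StrictConcave

section Quartic

variable {M Q Λ s : ℝ}

theorem P_hasDerivAt (M Q Λ s r : ℝ) : HasDerivAt (P M Q Λ s) (P' M Q Λ s r) r := by
  have h := ((((hasDerivAt_pow 4 r).const_mul (s * Λ / 3)).sub (hasDerivAt_pow 2 r)).add
      ((hasDerivAt_id r).const_mul (2 * s * M))).sub_const (s * Q ^ 2)
  exact h.congr_deriv (by simp only [P']; push_cast; ring)

theorem P'_hasDerivAt (M Q Λ s r : ℝ) : HasDerivAt (P' M Q Λ s) (P'' M Q Λ s r) r := by
  have h := (((hasDerivAt_pow 3 r).const_mul (4 * s * Λ / 3)).sub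
      ((hasDerivAt_id r).const_mul 2)).add_const (2 * s * M)
  exact h.congr_deriv (by simp only [P'']; push_cast; ring)

theorem P_continuous (M Q Λ s : ℝ) : Continuous (P M Q Λ s) :=
  continuous_iff_continuousAt.2 fun r => (P_hasDerivAt M Q Λ s r).continuousAt

theorem P_strictConcaveOn (hsΛ : s * Λ ≤ 0) : StrictConcaveOn ℝ univ (P M Q Λ s) := by
  have hderiv : deriv (P M Q Λ s) = P' M Q Λ s := funext fun r => (P_hasDerivAt M Q Λ s r).deriv
  refine strictConcaveOn_univ_of_deriv2_neg (P_continuous M Q Λ s) fun r => ?_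
  rw [Function.iterate_succ_apply, Function.iterate_one, hderiv, (P'_hasDerivAt M Q Λ s r).deriv,
    P'']
  nlinarith [mul_nonpos_of_nonpos_of_nonneg hsΛ (sq_nonneg r)]

theorem P_zero_neg (hs : 0 < s) (hQ : Q ≠ 0) : P M Q Λ s 0 < 0 := by
  have : 0 < s * Q ^ 2 := by positivity
  simp only [P]
  linarith

theorem P_neg_of_two_mul_le (hΛ : Λ ≤ 0) (hs : 0 < s) (hQ : Q ≠ 0) {r : ℝ} (hr₀ : 0 ≤ r)
    (hr : 2 * s * M ≤ r) : P M Q Λ s r < 0 := by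
  have h₁ : s * Λ / 3 * r ^ 4 ≤ 0 :=
    mul_nonpos_of_nonpos_of_nonneg (by nlinarith) (by positivity)
  have h₂ : r * (2 * s * M - r) ≤ 0 := mul_nonpos_of_nonneg_of_nonpos hr₀ (by linarith)
  have h₃ : 0 < s * Q ^ 2 := by positivity
  simp only [P]
  nlinarith

theorem P_eq_add (M Q Λ Λ' s r : ℝ) :
    P M Q Λ s r = P M Q Λ' s r + s * (Λ - Λ') / 3 * r ^ 4 := by
  simp only [P]; ring

/-- The double root of `P` at `Λ = Λ₋`. -/
def doubleRoot (M Q s : ℝ) : ℝ := (3 * s * M - √(s * (9 * s * M ^ 2 - 8 * Q ^ 2))) / 2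

theorem doubleRoot_pos (hs : 0 < s) (hQ : Q ≠ 0) (hM : 0 < M) : 0 < doubleRoot M Q s := by
  have hsq : √(s * (9 * s * M ^ 2 - 8 * Q ^ 2)) < 3 * s * M := by
    rw [Real.sqrt_lt' (by positivity)]
    nlinarith [mul_pos hs (sq_pos_of_ne_zero hQ)]
  rw [doubleRoot]
  linarith

theorem doubleRoot_lt (hs : 0 < s) (hM : 0 < M) : doubleRoot M Q s < 2 * s * M := by
  have := Real.sqrt_nonneg (s * (9 * s * M ^ 2 - 8 * Q ^ 2))
  rw [doubleRoot]
  nlinarith [mul_pos hs hM]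

theorem P_Λminus_doubleRoot (hs : 0 < s) (hQ : Q ≠ 0) (hM : 0 ≤ M)
    (hβ : 0 ≤ 9 * s * M ^ 2 - 8 * Q ^ 2) : P M Q (Λminus M Q s) s (doubleRoot M Q s) = 0 := by
  set t := √(s * (9 * s * M ^ 2 - 8 * Q ^ 2))
  have ht2 : t ^ 2 = s * (9 * s * M ^ 2 - 8 * Q ^ 2) := Real.sq_sqrt (by positivity)
  have hsqrt : √(s * M ^ 2 * (9 * s * M ^ 2 - 8 * Q ^ 2) ^ 3)
      = M * (9 * s * M ^ 2 - 8 * Q ^ 2) * t := by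
    rw [show s * M ^ 2 * (9 * s * M ^ 2 - 8 * Q ^ 2) ^ 3
        = (M * (9 * s * M ^ 2 - 8 * Q ^ 2)) ^ 2 * (s * (9 * s * M ^ 2 - 8 * Q ^ 2)) by ring,
      Real.sqrt_mul (sq_nonneg _), Real.sqrt_sq (by positivity)]
  have hΛ : 32 * s ^ 2 * Q ^ 6 * Λminus M Q s
      = 8 * Q ^ 4 - (9 * s * M ^ 2 - 8 * Q ^ 2) * (9 * s * M ^ 2 - 8 * Q ^ 2 + 4 * Q ^ 2)
        - 3 * (M * (9 * s * M ^ 2 - 8 * Q ^ 2) * t) := by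
    rw [Λminus, hsqrt]; field_simp
  have h96 : 96 * s ^ 2 * Q ^ 6 * P M Q (Λminus M Q s) s (doubleRoot M Q s) = 0 := by
    simp only [P, doubleRoot]
    linear_combination (s * ((3 * s * M - t) / 2) ^ 4) * hΛ + ((-3/2:ℝ) * Q ^ 4 * s * t ^ 2
      + (-12:ℝ) * Q ^ 6 * s ^ 2 + (3/2:ℝ) * M * Q ^ 2 * s * t ^ 3 + (6:ℝ) * M * Q ^ 4 * s ^ 2 * t
      + (-45/4:ℝ) * M ^ 2 * Q ^ 2 * s ^ 2 * t ^ 2 + (-9/2:ℝ) * M ^ 2 * Q ^ 4 * s ^ 3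
      + (-27/16:ℝ) * M ^ 3 * s ^ 2 * t ^ 3 + (27:ℝ) * M ^ 3 * Q ^ 2 * s ^ 3 * t
      + (243/16:ℝ) * M ^ 4 * s ^ 3 * t ^ 2 + (-81/4:ℝ) * M ^ 4 * Q ^ 2 * s ^ 4
      + (-729/16:ℝ) * M ^ 5 * s ^ 4 * t + (729/16:ℝ) * M ^ 6 * s ^ 5) * ht2
  exact (mul_eq_zero.1 h96).resolve_left (by positivity)

theorem P_doubleRoot_pos (hs : 0 < s) (hQ : Q ≠ 0) (hM : 0 < M)
    (hβ : 0 ≤ 9 * s * M ^ 2 - 8 * Q ^ 2) (hΛ : Λminus M Q s < Λ) :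
    0 < P M Q Λ s (doubleRoot M Q s) := by
  rw [P_eq_add M Q Λ (Λminus M Q s), P_Λminus_doubleRoot hs hQ hM.le hβ, zero_add]
  have := doubleRoot_pos hs hQ hM
  have := sub_pos.2 hΛ
  positivity

end Quartic

theorem root_structure_case_C4_general (M Q Λ s : ℝ)
    (hΛ : Λ < 0) (hQ : Q ≠ 0) (hM : 0 < M) (hs0 : 0 < s)
    (h : Q ^ 2 < s * M ^ 2) (hlo : Λminus M Q s < Λ) :
    ∃ R r₀ : ℝ, 0 < R ∧ R < r₀ ∧
      P M Q Λ s R = 0 ∧ P M Q Λ s r₀ = 0 ∧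
      (∀ r : ℝ, P M Q Λ s r = 0 → r = R ∨ r = r₀) ∧
      0 < P' M Q Λ s R ∧ P' M Q Λ s r₀ < 0 ∧
      (∀ r : ℝ, 0 ≤ r → r < R → P M Q Λ s r < 0) ∧
      (∀ r : ℝ, r₀ < r → P M Q Λ s r < 0) := by
  have hconc := P_strictConcaveOn (M := M) (Q := Q) (mul_nonpos_of_nonneg_of_nonpos hs0.le hΛ.le)
  have hβ : 0 ≤ 9 * s * M ^ 2 - 8 * Q ^ 2 := by nlinarith [sq_nonneg Q]
  have hc := P_doubleRoot_pos hs0 hQ hM hβ hlo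
  obtain ⟨R, r₀, hR, hRc, hcr₀, hPR, hPr₀, hroots, hleft, hright⟩ :=
    hconc.exists_two_roots (P_continuous M Q Λ s) (doubleRoot_pos hs0 hQ hM)
      (doubleRoot_lt hs0 hM) (P_zero_neg hs0 hQ) hc
      (P_neg_of_two_mul_le hΛ.le hs0 hQ (by positivity) le_rfl)
  exact ⟨R, r₀, hR, hRc.trans hcr₀, hPR, hPr₀, hroots,
    hconc.hasDerivAt_pos_of_le hRc (hPR ▸ hc.le) (P_hasDerivAt M Q Λ s R),
    hconc.hasDerivAt_neg_of_ge hcr₀ (hPr₀ ▸ hc.le) (P_hasDerivAt M Q Λ s r₀),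
    fun r _ hr => hleft r hr, hright⟩

/-- Case C₄ (Λ₋ < Λ < 0, Q ≠ 0, sM² > Q², M > 0): exactly two real roots, both positive,
with the stated derivative and sign structure. -/
theorem root_structure_case_C4 (M Q Λ s : ℝ)
    (hΛ : Λ < 0) (hQ : Q ≠ 0) (hM : 0 < M) (hs0 : 0 < s) (hs1 : s ≤ 1)
    (h : Q ^ 2 < s * M ^ 2) (hlo : Λminus M Q s < Λ) :
    ∃ R r₀ : ℝ, 0 < R ∧ R < r₀ ∧
      P M Q Λ s R = 0 ∧ P M Q Λ s r₀ = 0 ∧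
      (∀ r : ℝ, P M Q Λ s r = 0 → r = R ∨ r = r₀) ∧
      0 < P' M Q Λ s R ∧ P' M Q Λ s r₀ < 0 ∧
      (∀ r : ℝ, 0 ≤ r → r < R → P M Q Λ s r < 0) ∧
      (∀ r : ℝ, r₀ < r → P M Q Λ s r < 0) :=
  root_structure_case_C4_general M Q Λ s hΛ hQ hM hs0 h hlo
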